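/- arXiv:1511.07049 — 4 statements merged into one kernel-verified Lean document; each statement's English description precedes it below -/
import Mathlib

section
/- Let G be a group and E ⊆ G a symmetric subset containing the identity. Define E* = {(s,t) ∈ G × G : t * s⁻¹ ∈ E}. Then E is a chordal subset of G (i.e., whenever n ≥ 4 and s₁,…,sₙ ∈ E satisfy sₙ ⋯ s₂ s₁ = e, there exist indices i, k with 2 ≤ k − i ≤ n − 2 such that s_{k−1} s_{k−2} ⋯ s_i ∈ E) if and only if the graph on G with edge relation E* is chordal (every cycle x₁,…,xₙ of length n ≥ 4, meaning (xᵢ, x_{i+1}) ∈ E* with indices mod n, has a chord (xᵢ, x_k) ∈ E* with 2 ≤ |i − k| ≤ n − 2). -/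
/-- The product `s k * s (k-1) * ⋯ * s (j+1) * s j` (1-based style: multiplies the
values of `s` on the interval `[j, k]` in decreasing order of index). -/
def revProd {G : Type*} [Group G] (s : ℕ → G) (j k : ℕ) : G :=
  ((List.range (k + 1 - j)).map (fun l => s (k - l))).prod

/-- `E` is a chordal subset of `G`: whenever `n ≥ 4` and `s 1, …, s n ∈ E` with
`s n * ⋯ * s 2 * s 1 = 1`, there are `i, k` with `2 ≤ k - i ≤ n - 2` and
`s (k-1) * ⋯ * s i ∈ E`. -/
def IsChordalSubset {G : Type*} [Group G] (E : Set G) : Prop :=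
  ∀ (n : ℕ), 4 ≤ n → ∀ s : ℕ → G, (∀ i, 1 ≤ i → i ≤ n → s i ∈ E) →
    revProd s 1 n = 1 →
    ∃ i k, 1 ≤ i ∧ k ≤ n ∧ 2 ≤ k - i ∧ k - i ≤ n - 2 ∧ revProd s i (k - 1) ∈ E

/-- The graph on `G` with edge relation `E* = {(s,t) : t s⁻¹ ∈ E}` is chordal: every
cycle `x 1, …, x n` of length `n ≥ 4` has a chord `(x i, x k)` with `2 ≤ k - i ≤ n - 2`. -/
def IsChordalGraph {G : Type*} [Group G] (E : Set G) : Prop :=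
  ∀ (n : ℕ), 4 ≤ n → ∀ x : ℕ → G,
    (∀ i, 1 ≤ i → i < n → x (i + 1) * (x i)⁻¹ ∈ E) → x 1 * (x n)⁻¹ ∈ E →
    ∃ i k, 1 ≤ i ∧ k ≤ n ∧ 2 ≤ k - i ∧ k - i ≤ n - 2 ∧ x k * (x i)⁻¹ ∈ E

lemma revProd_empty {G : Type*} [Group G] (s : ℕ → G) (j k : ℕ) (h : k < j) :
    revProd s j k = 1 := by
  unfold revProd
  have : k + 1 - j = 0 := by omega
  simp [this]

lemma revProd_succ {G : Type*} [Group G] (s : ℕ → G) (j k : ℕ) (h : j ≤ k + 1) :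
    revProd s j (k + 1) = s (k + 1) * revProd s j k := by
  unfold revProd
  have h1 : k + 1 + 1 - j = (k + 1 - j) + 1 := by omega
  rw [h1, List.range_succ_eq_map, List.map_cons, List.prod_cons]
  rw [List.map_map]
  have : ((fun l => s (k + 1 - l)) ∘ Nat.succ) = fun l => s (k - l) := by
    funext l
    simp [Function.comp, Nat.succ_sub_succ]
  rw [this]
  norm_num

lemma revProd_split {G : Type*} [Group G] (s : ℕ → G) (j m k : ℕ)
    (hj : j ≤ m + 1) (hm : m ≤ k) :
    revProd s j k = revProd s (m + 1) k * revProd s j m := by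
  induction k with
  | zero =>
    have : m = 0 := by omega
    subst this
    rw [revProd_empty s 1 0 (by omega), one_mul]
  | succ k ih =>
    rcases Nat.lt_or_ge m (k+1) with hlt | hge
    · have hmk : m ≤ k := by omega
      rw [revProd_succ s j k (by omega), ih hmk,
        revProd_succ s (m+1) k (by omega), mul_assoc]
    · have : m = k + 1 := by omega
      subst this
      rw [revProd_empty s (k+1+1) (k+1) (by omega), one_mul]

/-- A symmetric subset `E` of a group `G` containing the identity is a chordal subset
iff the graph with edge set `E*` is chordal. -/
theorem stmt_0 {G : Type*} [Group G] (E : Set G)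
    (hsym : ∀ s ∈ E, s⁻¹ ∈ E) (he : (1 : G) ∈ E) :
    IsChordalSubset E ↔ IsChordalGraph E := by
  constructor
  · intro hsub n hn x hedge hlast
    set s : ℕ → G := fun i => if i = n then x 1 * (x n)⁻¹ else x (i + 1) * (x i)⁻¹ with hs
    have hsE : ∀ i, 1 ≤ i → i ≤ n → s i ∈ E := by
      intro i h1 h2
      rcases eq_or_lt_of_le h2 with rfl | hlt
      · simpa [hs] using hlast
      · simp only [hs]
        rw [if_neg (by omega)]
        exact hedge i h1 hlt
    have key : ∀ k, k ≤ n - 1 → ∀ i, 1 ≤ i → i ≤ k + 1 →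
        revProd s i k = x (k + 1) * (x i)⁻¹ := by
      intro k
      induction k with
      | zero =>
        intro _ i h1 h2
        have hi : i = 1 := by omega
        subst hi
        rw [revProd_empty s 1 0 (by omega)]
        simp
      | succ k ih =>
        intro hk i h1 h2
        rcases eq_or_lt_of_le h2 with rfl | hlt
        · rw [revProd_empty s (k+1+1) (k+1) (by omega)]
          simp
        · have hik : i ≤ k + 1 := by omega
          rw [revProd_succ s i k (by omega), ih (by omega) i h1 hik]
          simp only [hs]
          rw [if_neg (by omega)]
          group
    have hprod : revProd s 1 n = 1 := by
      obtain ⟨m, rfl⟩ : ∃ m, n = m + 1 := ⟨n - 1, by omega⟩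
      rw [revProd_succ s 1 m (by omega), key m (by omega) 1 le_rfl (by omega)]
      simp only [hs, if_pos rfl]
      group
    obtain ⟨i, k, h1, h2, h3, h4, h5⟩ := hsub n hn s hsE hprod
    refine ⟨i, k, h1, h2, h3, h4, ?_⟩
    rwa [key (k - 1) (by omega) i h1 (by omega), show k - 1 + 1 = k by omega] at h5
  · intro hgr n hn s hsE hprod
    set x : ℕ → G := fun i => revProd s 1 (i - 1) with hx
    have hx1 : x 1 = 1 := by
      simp only [hx]
      exact revProd_empty s 1 0 (by omega)
    have hedge : ∀ i, 1 ≤ i → i < n → x (i + 1) * (x i)⁻¹ ∈ E := by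
      intro i h1 h2
      have hstep : x (i + 1) = s i * x i := by
        simp only [hx]
        rw [show i + 1 - 1 = (i - 1) + 1 by omega,
          revProd_succ s 1 (i - 1) (by omega), show i - 1 + 1 = i by omega]
      rw [hstep, mul_inv_cancel_right]
      exact hsE i h1 (le_of_lt h2)
    have hlast : x 1 * (x n)⁻¹ ∈ E := by
      have h6 : s n * revProd s 1 (n - 1) = 1 := by
        have h := revProd_succ s 1 (n - 1) (by omega)
        rw [show n - 1 + 1 = n by omega] at h
        rw [← h]
        exact hprod
      have h7 : x 1 * (x n)⁻¹ = s n := by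
        rw [hx1, one_mul]
        simp only [hx]
        exact inv_eq_of_mul_eq_one_left h6
      rw [h7]
      exact hsE n (by omega) le_rfl
    obtain ⟨i, k, h1, h2, h3, h4, h5⟩ := hgr n hn x hedge hlast
    refine ⟨i, k, h1, h2, h3, h4, ?_⟩
    have hsplit : revProd s 1 (k - 1) = revProd s i (k - 1) * revProd s 1 (i - 1) := by
      have h := revProd_split s 1 (i - 1) (k - 1) (by omega) (by omega)
      rwa [show i - 1 + 1 = i by omega] at h
    simp only [hx] at h5
    rw [hsplit, mul_inv_cancel_right] at h5
    exact h5
end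

section
/- Let α, β ⊆ ℝ be Borel sets and E ⊆ ℝ a Borel set such that β − α ⊆ E (i.e., b − a ∈ E for all a ∈ α, b ∈ β). Let α₀ (resp. β₀) be the set of Lebesgue density points of α contained in α (resp. of β contained in β). Then β₀ − α₀ is contained in the topological interior of E. -/
open MeasureTheory Set Filter
open scoped Pointwise Topology

/-- `x` is a Lebesgue density point of `α ⊆ ℝ`. -/
def IsDensityPoint (α : Set ℝ) (x : ℝ) : Prop :=
  Tendsto (fun ε : ℝ => volume (α ∩ Ioo (x - ε) (x + ε)) / ENNReal.ofReal (2 * ε))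
    (𝓝[>] 0) (𝓝 1)

/-- If `α, β, E ⊆ ℝ` are Borel sets with `β - α ⊆ E`, and `α₀` (resp. `β₀`) is the set
of density points of `α` in `α` (resp. of `β` in `β`), then `β₀ - α₀ ⊆ interior E`. -/
theorem stmt_5 (α β E : Set ℝ) (hα : MeasurableSet α) (hβ : MeasurableSet β)
    (hE : MeasurableSet E) (hsub : ∀ a ∈ α, ∀ b ∈ β, b - a ∈ E) :
    ∀ a ∈ {x ∈ α | IsDensityPoint α x}, ∀ b ∈ {y ∈ β | IsDensityPoint β y},
      b - a ∈ interior E := by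
  rintro a ⟨haα, hda⟩ b ⟨hbβ, hdb⟩
  have h34 : (3/4 : ENNReal) < 1 := by
    rw [ENNReal.div_lt_iff (by norm_num) (by norm_num)]; norm_num
  have hA' := hda.eventually (eventually_gt_nhds h34)
  have hB' := hdb.eventually (eventually_gt_nhds h34)
  obtain ⟨ε, ⟨hAr, hBr⟩, hε⟩ := ((hA'.and hB').and self_mem_nhdsWithin).exists

  set A := α ∩ Ioo (a - ε) (a + ε) with hAdef
  set B := β ∩ Ioo (b - ε) (b + ε) with hBdef
  have h2ε : (0:ℝ) < 2 * ε := by linarith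
  have hμA : ENNReal.ofReal (3/2 * ε) < volume A := by
    have := (ENNReal.lt_div_iff_mul_lt (Or.inl (by positivity))
      (Or.inl ENNReal.ofReal_ne_top)).mp hAr
    calc ENNReal.ofReal (3/2 * ε) = 3/4 * ENNReal.ofReal (2 * ε) := by
          rw [show (3/4 : ENNReal) = ENNReal.ofReal (3/4) by
            rw [ENNReal.ofReal_div_of_pos] <;> norm_num,
            ← ENNReal.ofReal_mul (by norm_num)]
          ring_nf
      _ < volume A := this
  have hμB : ENNReal.ofReal (3/2 * ε) < volume B := by
    have := (ENNReal.lt_div_iff_mul_lt (Or.inl (by positivity))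
      (Or.inl ENNReal.ofReal_ne_top)).mp hBr
    calc ENNReal.ofReal (3/2 * ε) = 3/4 * ENNReal.ofReal (2 * ε) := by
          rw [show (3/4 : ENNReal) = ENNReal.ofReal (3/4) by
            rw [ENNReal.ofReal_div_of_pos] <;> norm_num,
            ← ENNReal.ofReal_mul (by norm_num)]
          ring_nf
      _ < volume B := this
  -- show the ball around b - a is inside E
  have hball : Metric.ball (b - a) (ε/2) ⊆ E := by
    intro t ht
    rw [Metric.mem_ball, Real.dist_eq] at ht
    set C := (fun x => t + x) '' A with hCdef
    have hμC : volume C = volume A := by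
      rw [hCdef, Set.image_add_left]
      exact measure_preimage_add _ _ _
    have hCJ : C ⊆ Ioo (b - 3/2*ε) (b + 3/2*ε) := by
      rintro _ ⟨x, ⟨_, hx1, hx2⟩, rfl⟩
      have : |t - (b - a)| < ε / 2 := ht
      rw [abs_lt] at this
      constructor <;> simp only [Set.mem_Ioo] <;> linarith
    have hBJ : B ⊆ Ioo (b - 3/2*ε) (b + 3/2*ε) := by
      rintro x ⟨_, hx1, hx2⟩
      constructor <;> linarith [hx1, hx2]
    have hBm : MeasurableSet B := hβ.inter measurableSet_Ioo
    have hunion : volume (C ∪ B) ≤ ENNReal.ofReal (3 * ε) := by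
      calc volume (C ∪ B) ≤ volume (Ioo (b - 3/2*ε) (b + 3/2*ε)) :=
            measure_mono (Set.union_subset hCJ hBJ)
        _ = ENNReal.ofReal (3 * ε) := by rw [Real.volume_Ioo]; ring_nf
    have hsum : ENNReal.ofReal (3 * ε) < volume C + volume B := by
      calc ENNReal.ofReal (3 * ε)
          = ENNReal.ofReal (3/2 * ε) + ENNReal.ofReal (3/2 * ε) := by
            rw [← ENNReal.ofReal_add (by positivity) (by positivity)]; ring_nf
        _ < volume C + volume B := by
            rw [hμC]; exact ENNReal.add_lt_add hμA hμB
    have hkey : volume (C ∪ B) < volume C + volume B := lt_of_le_of_lt hunion hsum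
    have hinter : volume (C ∩ B) ≠ 0 := by
      intro h0
      have := measure_union_add_inter C hBm (μ := volume)
      rw [h0, add_zero] at this
      exact absurd this (ne_of_lt hkey)
    obtain ⟨y, ⟨x, ⟨hxα, _⟩, rfl⟩, hyβ, _⟩ := nonempty_of_measure_ne_zero hinter
    have := hsub x hxα (t + x) hyβ
    simpa using this
  exact mem_interior.mpr ⟨Metric.ball (b - a) (ε/2), hball, Metric.isOpen_ball,
    Metric.mem_ball_self (by linarith)⟩
end

section
/- There exists a symmetric Borel subset E of the circle group (realized as (−1,1] with addition mod 2) containing 0 and of positive measure, equal to the closure of its interior, such that E contains no symmetric open neighbourhood of 0. Concretely, for a strictly decreasing sequence (tₙ) in (0,1) converging to 0, the set E = {0} ∪ ⋃ₙ ([t_{2n}, t_{2n−1}] ∪ [−t_{2n−1}, −t_{2n}]) has these properties. -/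
open MeasureTheory Set Filter
open scoped Topology

/-- Realizing the circle group as `(-1,1]` with addition mod 2: for any strictly
decreasing sequence `t 0 > t 1 > ⋯` in `(0,1)` converging to `0`, the set
`E = {0} ∪ ⋃ₙ ([t (2n+1), t (2n)] ∪ [-(t (2n)), -(t (2n+1))])` is a Borel symmetric
subset of `(-1,1]` of positive measure containing `0`, equal to the closure of its
interior, which contains no symmetric open neighbourhood of `0`. -/
theorem stmt_6 (t : ℕ → ℝ) (ht : StrictAnti t) (ht01 : ∀ n, t n ∈ Ioo (0 : ℝ) 1)
    (htlim : Tendsto t atTop (𝓝 0)) :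
    ∀ E : Set ℝ,
      E = {0} ∪ ⋃ n : ℕ, (Icc (t (2 * n + 1)) (t (2 * n)) ∪
        Icc (-(t (2 * n))) (-(t (2 * n + 1)))) →
      MeasurableSet E ∧ E ⊆ Ioc (-1 : ℝ) 1 ∧ (0 : ℝ) ∈ E ∧
      (∀ x ∈ E, -x ∈ E) ∧ 0 < volume E ∧ E = closure (interior E) ∧
      ¬ ∃ V : Set ℝ, IsOpen V ∧ (∀ x ∈ V, -x ∈ V) ∧ (0 : ℝ) ∈ V ∧ V ⊆ E := by
  intro E hE
  have htpos : ∀ n, 0 < t n := fun n => (ht01 n).1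
  have htlt1 : ∀ n, t n < 1 := fun n => (ht01 n).2
  have htanti : Antitone t := ht.antitone
  have hlt : ∀ n, t (2 * n + 1) < t (2 * n) := fun n => ht (by omega)
  -- membership characterization
  have hmem : ∀ x, x ∈ E ↔ x = 0 ∨ ∃ n, x ∈ Icc (t (2 * n + 1)) (t (2 * n)) ∨
      x ∈ Icc (-(t (2 * n))) (-(t (2 * n + 1))) := by
    intro x
    simp [hE, mem_iUnion, mem_union]
  -- E is closed
  have hEclosed : IsClosed E := by
    rw [← closure_subset_iff_isClosed]
    intro x hx
    by_cases hx0 : x = 0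
    · rw [hmem]; exact Or.inl hx0
    · have habs : 0 < |x| := abs_pos.mpr hx0
      obtain ⟨N, hN⟩ := (htlim.eventually (gt_mem_nhds habs)).exists
      -- U = {y | t (2*N) < |y|}
      have hUopen : IsOpen {y : ℝ | t (2 * N) < |y|} :=
        isOpen_lt continuous_const continuous_abs
      have hxU : x ∈ {y : ℝ | t (2 * N) < |y|} := by
        have : t (2 * N) ≤ t N := htanti (by omega)
        exact lt_of_le_of_lt this hN
      set F : Set ℝ := ⋃ n ∈ Finset.range N, (Icc (t (2 * n + 1)) (t (2 * n)) ∪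
        Icc (-(t (2 * n))) (-(t (2 * n + 1)))) with hF
      have hFclosed : IsClosed F := by
        apply Set.Finite.isClosed_biUnion (Finset.finite_toSet _)
        intro n _
        exact isClosed_Icc.union isClosed_Icc
      have hsub : {y : ℝ | t (2 * N) < |y|} ∩ E ⊆ F := by
        rintro y ⟨hyU, hyE⟩
        rw [hmem] at hyE
        rcases hyE with rfl | ⟨n, hn⟩
        · simp only [mem_setOf_eq, abs_zero] at hyU
          exact absurd hyU (not_lt.mpr (htpos _).le)
        · have hyabs : |y| ≤ t (2 * n) := by
            rcases hn with ⟨h1, h2⟩ | ⟨h1, h2⟩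
            · rw [abs_of_pos (lt_of_lt_of_le (htpos _) h1)]; exact h2
            · rw [abs_of_neg (lt_of_le_of_lt h2 (by linarith [htpos (2*n+1)]))]
              linarith
          have hnN : n < N := by
            by_contra hcon
            push_neg at hcon
            have : t (2 * N) < t (2 * n) := lt_of_lt_of_le hyU hyabs
            have : t (2 * n) ≤ t (2 * N) := htanti (by omega)
            linarith
          exact mem_biUnion (Finset.mem_range.mpr hnN) hn
      have : x ∈ closure ({y : ℝ | t (2 * N) < |y|} ∩ E) :=
        hUopen.inter_closure ⟨hxU, hx⟩
      have : x ∈ F := hFclosed.closure_subset (closure_mono hsub this)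
      rw [hF, mem_iUnion₂] at this
      obtain ⟨n, _, hn⟩ := this
      rw [hmem]
      exact Or.inr ⟨n, by simpa [mem_union] using hn⟩
  refine ⟨?_, ?_, ?_, ?_, ?_, ?_, ?_⟩
  · -- measurable
    rw [hE]
    exact (measurableSet_singleton 0).union
      (MeasurableSet.iUnion fun n => measurableSet_Icc.union measurableSet_Icc)
  · -- subset of Ioc (-1) 1
    intro x hx
    rw [hmem] at hx
    rcases hx with rfl | ⟨n, ⟨h1, h2⟩ | ⟨h1, h2⟩⟩
    · exact ⟨by norm_num, by norm_num⟩
    · exact ⟨by linarith [htpos (2 * n + 1)], by linarith [htlt1 (2 * n)]⟩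
    · exact ⟨by linarith [htlt1 (2 * n)], by linarith [htpos (2 * n + 1)]⟩
  · rw [hmem]; exact Or.inl rfl
  · -- symmetric
    intro x hx
    rw [hmem] at hx ⊢
    rcases hx with rfl | ⟨n, ⟨h1, h2⟩ | ⟨h1, h2⟩⟩
    · left; simp
    · exact Or.inr ⟨n, Or.inr ⟨by linarith, by linarith⟩⟩
    · exact Or.inr ⟨n, Or.inl ⟨by linarith, by linarith⟩⟩
  · -- positive volume
    have hsub : Icc (t 1) (t 0) ⊆ E := by
      intro x hx
      rw [hmem]
      exact Or.inr ⟨0, Or.inl (by simpa using hx)⟩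
    calc (0 : ENNReal) < volume (Icc (t 1) (t 0)) := by
          rw [Real.volume_Icc]
          exact ENNReal.ofReal_pos.mpr (by linarith [ht (by norm_num : (0:ℕ) < 1)])
      _ ≤ volume E := measure_mono hsub
  · -- E = closure (interior E)
    apply Subset.antisymm
    · -- E ⊆ closure (interior E)
      have hIoo : ∀ n, Ioo (t (2 * n + 1)) (t (2 * n)) ⊆ interior E := by
        intro n
        apply interior_maximal _ isOpen_Ioo
        intro x hx
        rw [hmem]
        exact Or.inr ⟨n, Or.inl ⟨hx.1.le, hx.2.le⟩⟩
      have hIoo' : ∀ n, Ioo (-(t (2 * n))) (-(t (2 * n + 1))) ⊆ interior E := by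
        intro n
        apply interior_maximal _ isOpen_Ioo
        intro x hx
        rw [hmem]
        exact Or.inr ⟨n, Or.inr ⟨hx.1.le, hx.2.le⟩⟩
      have hIcc : ∀ n, Icc (t (2 * n + 1)) (t (2 * n)) ⊆ closure (interior E) := by
        intro n
        rw [← closure_Ioo (hlt n).ne]
        exact closure_mono (hIoo n)
      have hIcc' : ∀ n, Icc (-(t (2 * n))) (-(t (2 * n + 1))) ⊆ closure (interior E) := by
        intro n
        rw [← closure_Ioo (by linarith [hlt n] : -(t (2 * n)) ≠ -(t (2 * n + 1)))]
        exact closure_mono (hIoo' n)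
      intro x hx
      rw [hmem] at hx
      rcases hx with rfl | ⟨n, hn | hn⟩
      · -- 0 is a limit of t (2*n)
        have h2 : Tendsto (fun n : ℕ => 2 * n) atTop atTop :=
          tendsto_atTop_atTop.mpr fun b => ⟨b, fun a ha => by omega⟩
        have htev : Tendsto (fun n => t (2 * n)) atTop (𝓝 0) := htlim.comp h2
        apply isClosed_closure.mem_of_tendsto htev
        filter_upwards with n
        exact hIcc n ⟨(hlt n).le, le_refl _⟩
      · exact hIcc n hn
      · exact hIcc' n hn
    · exact closure_minimal interior_subset hEclosed
  · -- no symmetric open neighbourhood of 0 inside E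
    rintro ⟨V, hVopen, -, hV0, hVE⟩
    obtain ⟨ε, hε, hball⟩ := Metric.isOpen_iff.mp hVopen 0 hV0
    obtain ⟨n, hn⟩ := (htlim.eventually (gt_mem_nhds hε)).exists
    have h1 : t (2 * n + 1) < ε := lt_of_le_of_lt (htanti (by omega)) hn
    set x := (t (2 * n + 2) + t (2 * n + 1)) / 2 with hx
    have hlt2 : t (2 * n + 2) < t (2 * n + 1) := ht (by omega)
    have hx1 : t (2 * n + 2) < x := by rw [hx]; linarith
    have hx2 : x < t (2 * n + 1) := by rw [hx]; linarith
    have hxpos : 0 < x := lt_trans (htpos _) hx1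
    have hxV : x ∈ V := hball (by
      simp only [Metric.mem_ball, Real.dist_eq, sub_zero]
      rw [abs_of_pos hxpos]
      linarith)
    have hxE := hVE hxV
    rw [hmem] at hxE
    rcases hxE with h0 | ⟨m, ⟨g1, g2⟩ | ⟨g1, g2⟩⟩
    · exact absurd h0 hxpos.ne'
    · rcases le_or_gt m n with hmn | hmn
      · have : t (2 * n + 1) ≤ t (2 * m + 1) := htanti (by omega)
        linarith
      · have : t (2 * m) ≤ t (2 * n + 2) := htanti (by omega)
        linarith
    · have : -(t (2 * m + 1)) < 0 := by linarith [htpos (2 * m + 1)]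
      linarith
end

section
/- Every symmetric arithmetic progression E = {kd : k ∈ ℤ, |k| ≤ N} ⊆ ℤ (containing 0) is a chordal subset of ℤ: whenever n ≥ 4 and s₁, …, sₙ ∈ E with s₁ + s₂ + ⋯ + sₙ = 0, there exist i, k with 2 ≤ k − i ≤ n − 2 such that sᵢ + s_{i+1} + ⋯ + s_{k−1} ∈ E. -/
/-- Every symmetric arithmetic progression `E = {k*d : |k| ≤ N}` in `ℤ` is a chordal
subset of `ℤ`: whenever `n ≥ 4` and `s 1, …, s n ∈ E` sum to `0`, some partial sum
`s i + ⋯ + s (k-1)` with `2 ≤ k - i ≤ n - 2` lies in `E`. -/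
theorem stmt_13 (d N : ℤ) (hd : 1 ≤ d) (hN : 1 ≤ N)
    (E : Set ℤ) (hE : E = {m : ℤ | ∃ k : ℤ, |k| ≤ N ∧ m = k * d}) :
    ∀ (n : ℕ), 4 ≤ n → ∀ s : ℕ → ℤ, (∀ i, 1 ≤ i → i ≤ n → s i ∈ E) →
      (∑ i ∈ Finset.Icc 1 n, s i) = 0 →
      ∃ i k : ℕ, 1 ≤ i ∧ k ≤ n ∧ 2 ≤ k - i ∧ k - i ≤ n - 2 ∧
        (∑ j ∈ Finset.Icc i (k - 1), s j) ∈ E := by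
  intro n hn s hs hsum
  subst hE
  -- there is an adjacent pair with nonpositive product
  have key : ∃ i : ℕ, 1 ≤ i ∧ i + 1 ≤ n ∧ s i * s (i + 1) ≤ 0 := by
    by_contra h
    push_neg at h
    have h1 : s 1 ≠ 0 := by
      have := h 1 le_rfl (by omega)
      intro h0; rw [h0] at this; simp at this
    rcases lt_or_gt_of_ne h1 with hneg | hpos
    · have hall : ∀ i, 1 ≤ i → i ≤ n → s i < 0 := by
        intro i hi1 hin
        induction i with
        | zero => omega
        | succ j ih =>
          rcases Nat.eq_or_lt_of_le hi1 with he | hl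
          · rw [← he]; exact hneg
          · have hj1 : 1 ≤ j := by omega
            have hj : s j < 0 := ih hj1 (by omega)
            have := h j hj1 (by omega)
            nlinarith
      have hlt : (∑ i ∈ Finset.Icc 1 n, s i) < 0 := by
        apply Finset.sum_neg
        · intro i hi
          simp only [Finset.mem_Icc] at hi
          exact hall i hi.1 hi.2
        · exact Finset.nonempty_Icc.mpr (by omega)
      omega
    · have hall : ∀ i, 1 ≤ i → i ≤ n → 0 < s i := by
        intro i hi1 hin
        induction i with
        | zero => omega
        | succ j ih =>
          rcases Nat.eq_or_lt_of_le hi1 with he | hl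
          · rw [← he]; exact hpos
          · have hj1 : 1 ≤ j := by omega
            have hj : 0 < s j := ih hj1 (by omega)
            have := h j hj1 (by omega)
            nlinarith
      have hlt : 0 < (∑ i ∈ Finset.Icc 1 n, s i) := by
        apply Finset.sum_pos
        · intro i hi
          simp only [Finset.mem_Icc] at hi
          exact hall i hi.1 hi.2
        · exact Finset.nonempty_Icc.mpr (by omega)
      omega
  obtain ⟨i, hi1, hin, hprod⟩ := key
  obtain ⟨a, ha, hsa⟩ := hs i hi1 (by omega)
  obtain ⟨b, hb, hsb⟩ := hs (i + 1) (by omega) hin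
  -- a * b ≤ 0, hence |a + b| ≤ N
  have hab : a * b ≤ 0 := by
    rw [hsa, hsb] at hprod
    by_contra hposab
    push_neg at hposab
    have hdd : (0 : ℤ) < d * d := mul_pos (by omega) (by omega)
    have : (0 : ℤ) < a * b * (d * d) := mul_pos hposab hdd
    nlinarith
  have habs : |a + b| ≤ N := by
    rw [abs_le] at ha hb ⊢
    rcases mul_nonpos_iff.mp hab with ⟨h1, h2⟩ | ⟨h1, h2⟩ <;> omega
  by_cases hcase : i + 2 ≤ n
  · -- chord (i, i+2): the sum s i + s (i+1)
    refine ⟨i, i + 2, hi1, hcase, by omega, by omega, ?_⟩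
    have hsumeq : (∑ j ∈ Finset.Icc i (i + 2 - 1), s j) = s i + s (i + 1) := by
      rw [show i + 2 - 1 = i + 1 from rfl,
        Finset.sum_Icc_succ_top (by omega), Finset.Icc_self, Finset.sum_singleton]
    exact ⟨a + b, habs, by rw [hsumeq, hsa, hsb]; ring⟩
  · -- i + 1 = n: use the complementary chord (1, n-1)
    have hieq : i = n - 1 := by omega
    rw [hieq] at hsa
    rw [show i + 1 = n from by omega] at hsb
    have e1 := Finset.sum_Icc_succ_top (a := 1) (b := n - 1) (by omega) s
    have e2 := Finset.sum_Icc_succ_top (a := 1) (b := n - 2) (by omega) s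
    rw [show n - 1 + 1 = n from by omega] at e1
    rw [show n - 2 + 1 = n - 1 from by omega] at e2
    have hsplit : (∑ j ∈ Finset.Icc 1 (n - 2), s j) = -(s (n - 1) + s n) := by
      rw [e2] at e1
      rw [e1] at hsum
      linarith
    refine ⟨1, n - 1, le_rfl, by omega, by omega, by omega, ?_⟩
    rw [show n - 1 - 1 = n - 2 from by omega, hsplit, hsa, hsb]
    exact ⟨-(a + b), by rwa [abs_neg], by ring⟩
end
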